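/- arXiv:2604.14098 — 2 statements merged into one kernel-verified Lean document; each statement's English description precedes it below -/
import Mathlib

section
/- There is no two-dimensional subspace C of the three-dimensional Hilbert space ℂ³ such that for each i ∈ {x,y,z} the compression Π_C S_i Π_C of the spin-1 operator S_i to C is a scalar multiple of the projection Π_C. -/
open Matrix Complex

noncomputable def Sx : Matrix (Fin 3) (Fin 3) ℂ :=
  (Real.sqrt 2 : ℂ)⁻¹ • !![0, 1, 0; 1, 0, 1; 0, 1, 0]

noncomputable def Sy : Matrix (Fin 3) (Fin 3) ℂ :=
  (Real.sqrt 2 : ℂ)⁻¹ • !![0, -I, 0; I, 0, -I; 0, I, 0]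

noncomputable def Sz : Matrix (Fin 3) (Fin 3) ℂ :=
  !![1, 0, 0; 0, 0, 0; 0, 0, -1]

lemma spin_sqrt2_mul_self : ((Real.sqrt 2 : ℝ) : ℂ) * ((Real.sqrt 2 : ℝ) : ℂ) = 2 := by
  norm_cast
  rw [← Real.sqrt_mul_self (by norm_num : (0:ℝ) ≤ 2)]
  norm_num

lemma spin_inv_sqrt2 : ((Real.sqrt 2 : ℝ) : ℂ)⁻¹ * ((Real.sqrt 2 : ℝ) : ℂ)⁻¹ = (2:ℂ)⁻¹ := by
  rw [← mul_inv, spin_sqrt2_mul_self]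

lemma spin_Sx_sq : Sx * Sx = (2:ℂ)⁻¹ • !![1, 0, 1; 0, 2, 0; 1, 0, 1] := by
  rw [Sx, smul_mul_assoc, mul_smul_comm, smul_smul, spin_inv_sqrt2]
  congr 1
  norm_num [Matrix.mul_fin_three]

lemma spin_Sy_sq : Sy * Sy = (2:ℂ)⁻¹ • !![1, 0, -1; 0, 2, 0; -1, 0, 1] := by
  rw [Sy, smul_mul_assoc, mul_smul_comm, smul_smul, spin_inv_sqrt2]
  congr 1
  norm_num [Matrix.mul_fin_three, Complex.I_mul_I]

lemma spin_Sz_sq : Sz * Sz = !![1, 0, 0; 0, 0, 0; 0, 0, 1] := by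
  rw [Sz]
  ext i j
  fin_cases i <;> fin_cases j <;> norm_num [Matrix.mul_fin_three]

lemma spin_sum_sq : Sx * Sx + Sy * Sy + Sz * Sz = (2 : ℂ) • 1 := by
  rw [spin_Sx_sq, spin_Sy_sq, spin_Sz_sq]
  ext i j
  fin_cases i <;> fin_cases j <;>
    norm_num [Matrix.one_apply, Fin.ext_iff]

lemma spin_trace_Sx : Sx.trace = 0 := by simp [Sx, Matrix.trace_fin_three]
lemma spin_trace_Sy : Sy.trace = 0 := by simp [Sy, Matrix.trace_fin_three]
lemma spin_trace_Sz : Sz.trace = 0 := by simp [Sz, Matrix.trace_fin_three]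

lemma spin_trace_Sx_sq : (Sx * Sx).trace = 2 := by
  rw [spin_Sx_sq]; simp [Matrix.trace_fin_three]; norm_num
lemma spin_trace_Sy_sq : (Sy * Sy).trace = 2 := by
  rw [spin_Sy_sq]; simp [Matrix.trace_fin_three]; norm_num
lemma spin_trace_Sz_sq : (Sz * Sz).trace = 2 := by
  rw [spin_Sz_sq]; simp [Matrix.trace_fin_three]; norm_num

lemma spin_vecMulVec_sandwich (u w : Fin 3 → ℂ) (A : Matrix (Fin 3) (Fin 3) ℂ) :
    vecMulVec u w * A * vecMulVec u w = (A * vecMulVec u w).trace • vecMulVec u w := by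
  ext i j
  simp [Matrix.mul_apply, vecMulVec_apply, Matrix.trace, Matrix.diag, Fin.sum_univ_three,
    Matrix.smul_apply, smul_eq_mul]
  ring

lemma spin_decomp (P : Matrix (Fin 3) (Fin 3) ℂ) (hIdem : P * P = P) (hrank : P.rank = 2) :
    ∃ u w : Fin 3 → ℂ, (1 - P) = vecMulVec u w := by
  have hker : LinearMap.range (1 - P).mulVecLin = LinearMap.ker P.mulVecLin := by
    apply le_antisymm
    · rintro x ⟨y, rfl⟩
      have h : P.mulVecLin ((1 - P).mulVecLin y) = (P * (1 - P)).mulVecLin y := by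
        rw [Matrix.mulVecLin_mul]; rfl
      simp only [LinearMap.mem_ker, h]
      have h2 : P * (1 - P) = 0 := by rw [mul_sub, mul_one, hIdem, sub_self]
      simp [h2]
    · intro x hx
      refine ⟨x, ?_⟩
      simp only [LinearMap.mem_ker] at hx
      have hx' : P.mulVec x = 0 := hx
      simp [Matrix.mulVecLin_apply, Matrix.sub_mulVec, Matrix.one_mulVec, hx']
  have hfin : (1 - P).rank = 1 := by
    have h3 := LinearMap.finrank_range_add_finrank_ker P.mulVecLin
    have hd : Module.finrank ℂ (Fin 3 → ℂ) = 3 := by simp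
    rw [hd] at h3
    have hr1 : P.rank = Module.finrank ℂ (LinearMap.range P.mulVecLin) := rfl
    rw [hr1] at hrank
    have hr2 : (1 - P).rank = Module.finrank ℂ (LinearMap.range (1 - P).mulVecLin) := rfl
    rw [hr2, hker]
    omega
  have h1 : Module.finrank ℂ (LinearMap.range (1 - P).mulVecLin) = 1 := hfin
  rw [finrank_eq_one_iff'] at h1
  obtain ⟨v, hv0, hv⟩ := h1
  set u : Fin 3 → ℂ := (v : Fin 3 → ℂ) with hu
  have hcol : ∀ j : Fin 3, ∃ c : ℂ, c • u = (1 - P) *ᵥ Pi.single j 1 := by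
    intro j
    obtain ⟨c, hc⟩ := hv ⟨(1 - P) *ᵥ Pi.single j 1, ⟨Pi.single j 1, rfl⟩⟩
    exact ⟨c, congrArg Subtype.val hc⟩
  choose w hw using hcol
  refine ⟨u, w, ?_⟩
  ext i j
  have h1 : ((1 - P) *ᵥ Pi.single j 1) i = (1 - P) i j := by
    simp [Matrix.mulVec, dotProduct, Pi.single_apply, mul_ite]
  rw [← h1, ← hw j]
  simp [vecMulVec_apply, mul_comm]

/-- There is no two-dimensional subspace `C` of `ℂ³` (represented by its orthogonal
projection `P`, i.e. a Hermitian idempotent of rank 2) such that the compression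
`P Sᵢ P` is a scalar multiple of `P` for all `i ∈ {x,y,z}`. -/
theorem stmt_0 :
    ¬ ∃ P : Matrix (Fin 3) (Fin 3) ℂ, P.IsHermitian ∧ P * P = P ∧ P.rank = 2 ∧
      (∃ lx : ℝ, P * Sx * P = (lx : ℂ) • P) ∧
      (∃ ly : ℝ, P * Sy * P = (ly : ℂ) • P) ∧
      (∃ lz : ℝ, P * Sz * P = (lz : ℂ) • P) := by
  rintro ⟨P, hHerm, hIdem, hrank, ⟨lx, hx⟩, ⟨ly, hy⟩, ⟨lz, hz⟩⟩
  set q : Matrix (Fin 3) (Fin 3) ℂ := 1 - P with hq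
  have hP1q : P = 1 - q := by rw [hq, sub_sub_cancel]
  obtain ⟨u, w, huw⟩ := spin_decomp P hIdem hrank
  have keyA : ∀ A : Matrix (Fin 3) (Fin 3) ℂ, q * A * q = (A * q).trace • q := by
    intro A
    rw [hq, huw]
    exact spin_vecMulVec_sandwich u w A
  have hq0 : q ≠ 0 := by
    intro h
    have hfin : P.rank = 2 := hrank
    have : (1 - P) = (0 : Matrix (Fin 3) (Fin 3) ℂ) := by rw [← hq, h]
    have h1 : P = 1 := by
      have := sub_eq_zero.mp this
      exact this.symm
    rw [h1] at hfin
    simp [Matrix.rank_one] at hfin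
  have hqq : q * q = q := by
    rw [hq]
    rw [mul_sub, mul_one, sub_mul, one_mul, hIdem]
    abel
  have htrq : q.trace = 1 := by
    have h := keyA 1
    rw [mul_one, hqq, one_mul] at h
    by_contra hne
    have h2 : (q.trace - 1) • q = 0 := by
      rw [sub_smul, one_smul, ← h, sub_self]
    rcases smul_eq_zero.mp h2 with h3 | h3
    · exact hne (by linear_combination h3)
    · exact hq0 h3
  have htrP : P.trace = 2 := by
    have : P.trace = (1 : Matrix (Fin 3) (Fin 3) ℂ).trace - q.trace := by
      rw [hq, trace_sub]; ring
    rw [this, htrq, trace_one]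
    norm_num
  have main : ∀ (S : Matrix (Fin 3) (Fin 3) ℂ) (l : ℝ), S.trace = 0 → (S * S).trace = 2 →
      P * S * P = (l : ℂ) • P → ((S * S) * q).trace = 1 + (l : ℂ) ^ 2 := by
    intro S l h0 h2 hC
    have htrSP : (S * P).trace = 2 * l := by
      have e1 : (P * S * P).trace = (l : ℂ) * P.trace := by
        rw [hC, trace_smul, smul_eq_mul]
      have e2 : (P * S * P).trace = (S * P).trace := by
        rw [trace_mul_cycle, hIdem, trace_mul_comm]
      rw [e2, htrP] at e1
      linear_combination e1
    have hcq : (S * q).trace = -(2 * l) := by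
      have h : S * q = S - S * P := by rw [hq, mul_sub, mul_one]
      rw [h, trace_sub, h0, htrSP]
      ring
    have hexp : S * P * S * P = S * S - S * S * q - S * q * S + S * (q * S * q) := by
      rw [hP1q]
      noncomm_ring
    have h2l : (S * P * S * P).trace = 2 * (l : ℂ) ^ 2 := by
      have ha : S * P * S * P = S * (P * S * P) := by
        simp [Matrix.mul_assoc]
      rw [ha, hC, mul_smul_comm, trace_smul, smul_eq_mul, htrSP]
      ring
    have hqq2 : (S * (q * S * q)).trace = 4 * (l : ℂ) ^ 2 := by
      rw [keyA S, mul_smul_comm, trace_smul, smul_eq_mul, hcq]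
      ring
    have hSqS : (S * q * S).trace = (S * S * q).trace := by
      rw [trace_mul_cycle]
    have := congrArg Matrix.trace hexp
    rw [trace_add, trace_sub, trace_sub, h2l, h2, hqq2, hSqS] at this
    linear_combination (1/2 : ℂ) * this
  have ex := main Sx lx spin_trace_Sx spin_trace_Sx_sq hx
  have ey := main Sy ly spin_trace_Sy spin_trace_Sy_sq hy
  have ez := main Sz lz spin_trace_Sz spin_trace_Sz_sq hz
  have hsumtr : ((Sx * Sx) * q).trace + ((Sy * Sy) * q).trace + ((Sz * Sz) * q).trace
      = 2 := by
    rw [← trace_add, ← trace_add, ← add_mul, ← add_mul, spin_sum_sq, smul_mul_assoc,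
      one_mul, trace_smul, htrq, smul_eq_mul]
    norm_num
  rw [ex, ey, ez] at hsumtr
  have hreal : (lx : ℝ) ^ 2 + ly ^ 2 + lz ^ 2 = -1 := by
    have hc : ((lx ^ 2 + ly ^ 2 + lz ^ 2 : ℝ) : ℂ) = ((-1 : ℝ) : ℂ) := by
      push_cast
      linear_combination hsumtr
    exact_mod_cast hc
  nlinarith [sq_nonneg lx, sq_nonneg ly, sq_nonneg lz]
end

section
/- Suppose for all pairs α,β the Knill–Laflamme-type conditions Π L_α(ν) Π ∝ Π and Π L_α(ν)† L_β(ν') Π ∝ Π hold for all Bohr frequencies ν, ν', where L_α(ν) = Σ_{ε'−ε=ν} Π_ε A_α Π_{ε'}. Then Π A_α Π ∝ Π and Π A_α A_β Π ∝ Π for all α, β. -/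
open Matrix

/-- The Lindblad jump operator `L(ν) = Σ_{ε'−ε=ν} Π_ε A Π_{ε'}` associated to the
Bohr frequency `ν` of a spectral family of projections `Ps` with eigenvalues `ε`. -/
noncomputable def jumpOp {N k : ℕ} (ε : Fin k → ℝ)
    (Ps : Fin k → Matrix (Fin N) (Fin N) ℂ) (A : Matrix (Fin N) (Fin N) ℂ)
    (ν : ℝ) : Matrix (Fin N) (Fin N) ℂ :=
  ∑ p : Fin k × Fin k, if ε p.2 - ε p.1 = ν then Ps p.1 * A * Ps p.2 else 0

lemma sum_jumpOp {N k : ℕ} (ε : Fin k → ℝ)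
    (Ps : Fin k → Matrix (Fin N) (Fin N) ℂ)
    (hsum : ∑ e, Ps e = 1)
    (A : Matrix (Fin N) (Fin N) ℂ) :
    ∑ ν ∈ Finset.image (fun p : Fin k × Fin k => ε p.2 - ε p.1) Finset.univ,
      jumpOp ε Ps A ν = A := by
  unfold jumpOp
  rw [Finset.sum_comm]
  have key : ∀ p : Fin k × Fin k,
      (∑ ν ∈ Finset.image (fun p : Fin k × Fin k => ε p.2 - ε p.1) Finset.univ,
        (if ε p.2 - ε p.1 = ν then Ps p.1 * A * Ps p.2 else 0)) = Ps p.1 * A * Ps p.2 := by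
    intro p
    rw [Finset.sum_ite_eq]
    simp
  rw [Finset.sum_congr rfl (fun p _ => key p)]
  rw [Fintype.sum_prod_type]
  calc (∑ e : Fin k, ∑ e' : Fin k, Ps e * A * Ps e')
      = (∑ e, Ps e) * A * (∑ e', Ps e') := by
        rw [Finset.sum_mul, Finset.sum_mul]
        congr 1
        ext e : 1
        rw [Finset.mul_sum]
    _ = A := by rw [hsum]; simp

/-- If for all `α, β` the Knill–Laflamme-type conditions `P L_α(ν) P ∝ P` and
`P L_α(ν)† L_β(ν') P ∝ P` hold for all Bohr frequencies `ν, ν'`, then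
`P A_α P ∝ P` and `P A_α A_β P ∝ P` for all `α, β`. -/
theorem stmt_19 {N k ι : ℕ} (P : Matrix (Fin N) (Fin N) ℂ)
    (hP : P.IsHermitian) (hPidem : P * P = P)
    (ε : Fin k → ℝ) (hε : Function.Injective ε)
    (Ps : Fin k → Matrix (Fin N) (Fin N) ℂ)
    (hherm : ∀ e, (Ps e).IsHermitian)
    (hidem : ∀ e, Ps e * Ps e = Ps e)
    (horth : ∀ e e', e ≠ e' → Ps e * Ps e' = 0)
    (hsum : ∑ e, Ps e = 1)
    (A : Fin ι → Matrix (Fin N) (Fin N) ℂ) (hA : ∀ α, (A α).IsHermitian)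
    (hKL1 : ∀ α (ν : ℝ), ∃ c : ℂ, P * jumpOp ε Ps (A α) ν * P = c • P)
    (hKL2 : ∀ α β (ν ν' : ℝ), ∃ c : ℂ,
      P * (jumpOp ε Ps (A α) ν)ᴴ * jumpOp ε Ps (A β) ν' * P = c • P) :
    (∀ α, ∃ c : ℂ, P * A α * P = c • P) ∧
      (∀ α β, ∃ c : ℂ, P * (A α * A β) * P = c • P) := by
  set S := Finset.image (fun p : Fin k × Fin k => ε p.2 - ε p.1) Finset.univ with hS
  constructor
  · intro α
    choose c hc using hKL1 α
    refine ⟨∑ ν ∈ S, c ν, ?_⟩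
    calc P * A α * P = P * (∑ ν ∈ S, jumpOp ε Ps (A α) ν) * P := by
          rw [sum_jumpOp ε Ps hsum (A α)]
      _ = ∑ ν ∈ S, P * jumpOp ε Ps (A α) ν * P := by
          rw [Finset.mul_sum, Finset.sum_mul]
      _ = ∑ ν ∈ S, c ν • P := Finset.sum_congr rfl (fun ν _ => hc ν)
      _ = (∑ ν ∈ S, c ν) • P := by rw [Finset.sum_smul]
  · intro α β
    choose c hc using hKL2 α β
    refine ⟨∑ ν ∈ S, ∑ ν' ∈ S, c ν ν', ?_⟩
    have hAd : (∑ ν ∈ S, (jumpOp ε Ps (A α) ν)ᴴ) = A α := by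
      rw [← conjTranspose_sum, sum_jumpOp ε Ps hsum (A α), (hA α).eq]
    calc P * (A α * A β) * P
        = P * ((∑ ν ∈ S, (jumpOp ε Ps (A α) ν)ᴴ) *
            (∑ ν' ∈ S, jumpOp ε Ps (A β) ν')) * P := by
          rw [hAd, sum_jumpOp ε Ps hsum (A β)]
      _ = ∑ ν ∈ S, ∑ ν' ∈ S,
            P * (jumpOp ε Ps (A α) ν)ᴴ * jumpOp ε Ps (A β) ν' * P := by
          rw [Finset.sum_mul_sum, Finset.mul_sum, Finset.sum_mul]
          refine Finset.sum_congr rfl (fun ν _ => ?_)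
          rw [Finset.mul_sum, Finset.sum_mul]
          exact Finset.sum_congr rfl (fun ν' _ => by simp [mul_assoc])
      _ = ∑ ν ∈ S, ∑ ν' ∈ S, c ν ν' • P :=
          Finset.sum_congr rfl (fun ν _ => Finset.sum_congr rfl (fun ν' _ => hc ν ν'))
      _ = (∑ ν ∈ S, ∑ ν' ∈ S, c ν ν') • P := by
          simp [Finset.sum_smul]
end
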